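/- arXiv:cs/0606033 — 4 statements merged into one kernel-verified Lean document; each statement's English description precedes it below -/
import Mathlib

section
/- For every self-delimiting Turing machine C one has 1 ≥ Ω_C ≥ ζ_C ≥ Ω_C/2 ≥ 0; in particular every self-delimiting Turing machine is a tuatara machine (ζ_C ≤ 1). -/
open scoped ENNReal

/-- The domain of a Turing machine (a partial function on binary strings). -/
def dom (f : List Bool →. List Bool) : Set (List Bool) := {p | (f p).Dom}

/-- A machine is self-delimiting if its domain is prefix-free. -/
def SelfDelim (f : List Bool →. List Bool) : Prop :=
  ∀ p ∈ dom f, ∀ q ∈ dom f, p <+: q → p = q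

/-- Chaitin's Omega number of a machine, in `[0,∞]`. -/
noncomputable def Omega (f : List Bool →. List Bool) : ℝ≥0∞ :=
  ∑' p : dom f, (2 : ℝ≥0∞)⁻¹ ^ (p : List Bool).length

/-- `bin n` is the binary expansion of `n` with the leading 1 removed. -/
def bin (n : ℕ) : List Bool := (Nat.bits n).reverse.tail

/-- `Υ[A]`: the set of positive integers whose `bin`-code lies in `A`. -/
def Ups (A : Set (List Bool)) : Set ℕ := {n | 1 ≤ n ∧ bin n ∈ A}

/-- The zeta number of a machine, in `[0,∞]`. -/
noncomputable def zeta (f : List Bool →. List Bool) : ℝ≥0∞ :=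
  ∑' n : Ups (dom f), ((n : ℕ) : ℝ≥0∞)⁻¹

/-- `U` is a universal self-delimiting Turing machine. -/
def UnivSD (U : List Bool →. List Bool) : Prop :=
  SelfDelim U ∧ ∀ C : List Bool →. List Bool, Partrec C → SelfDelim C →
    ∃ c : ℕ, ∀ x ∈ dom C, ∃ p : List Bool, p.length ≤ x.length + c ∧ U p = C x

/-- `T` is a universal (plain) Turing machine. -/
def UnivTM (T : List Bool →. List Bool) : Prop :=
  ∀ C : List Bool →. List Bool, Partrec C →
    ∃ c : ℕ, ∀ x ∈ dom C, ∃ p : List Bool, p.length ≤ x.length + c ∧ T p = C x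

/-- Program-size / plain complexity of a string w.r.t. a machine. -/
noncomputable def Cpx (f : List Bool →. List Bool) (y : List Bool) : ℕ :=
  sInf {n : ℕ | ∃ w : List Bool, w.length = n ∧ y ∈ f w}

/-- Natural complexity of a string w.r.t. a machine, with `min ∅ = ∞`. -/
noncomputable def nabla (f : List Bool →. List Bool) (y : List Bool) : ℝ≥0∞ :=
  sInf {c : ℝ≥0∞ | ∃ n : ℕ, 1 ≤ n ∧ y ∈ f (bin n) ∧ c = (n : ℝ≥0∞)}

/-- The real number with binary digit sequence `x`. -/
noncomputable def realDigits (x : ℕ → Bool) : ℝ :=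
  ∑' i : ℕ, (if x i then (1 : ℝ) else 0) * (2 : ℝ)⁻¹ ^ (i + 1)

/-- The extended nonnegative real with binary digit sequence `x`. -/
noncomputable def ennDigits (x : ℕ → Bool) : ℝ≥0∞ :=
  ∑' i : ℕ, (if x i then (1 : ℝ≥0∞) else 0) * (2 : ℝ≥0∞)⁻¹ ^ (i + 1)

/-- The string of the first `m` digits of the sequence `x`. -/
def prefixStr (x : ℕ → Bool) (m : ℕ) : List Bool := (List.range m).map x

/-- A real is computable if it is approximated to within `2⁻ⁿ` by a computable
sequence of rationals. -/
def ComputableReal (s : ℝ) : Prop :=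
  ∃ f : ℕ → ℚ, Computable f ∧ ∀ n : ℕ, |s - (f n : ℝ)| ≤ (2 : ℝ)⁻¹ ^ n

/-!
The domain of a self-delimiting machine is a prefix-free code, so `Ω_C ≤ 1` is the Kraft
inequality. The map `n ↦ bin n` is a bijection `Υ[dom C] ≃ dom C` (its inverse `binInv` puts
the leading 1 back), and `2 ^ |bin n| ≤ n < 2 ^ (|bin n| + 1)`; hence each term `1/n` of `ζ_C`
lies between `2^(-|p|)/2` and `2^(-|p|)` for the corresponding term of `Ω_C`.
-/

def PrefixFree {α : Type*} (S : Set (List α)) : Prop :=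
  ∀ p ∈ S, ∀ q ∈ S, p <+: q → p = q

namespace PrefixFree

variable {α : Type*}

theorem eq_singleton_nil {S : Set (List α)} (h : PrefixFree S) (hnil : [] ∈ S) : S = {[]} :=
  Set.eq_singleton_iff_unique_mem.2
    ⟨hnil, fun w hw => (h [] hnil w hw List.nil_prefix).symm⟩

theorem uniquelyDecodable {S : Set (List α)} (h : PrefixFree S) (hnil : [] ∉ S) :
    InformationTheory.UniquelyDecodable S := by
  intro L₁ L₂ hL₁ hL₂ hflat
  induction L₁ generalizing L₂ with
  | nil =>
    cases L₂ with
    | nil => rfl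
    | cons w L₂ =>
      simp only [List.flatten_nil, List.flatten_cons, List.nil_eq, List.append_eq_nil_iff] at hflat
      exact absurd (hflat.1 ▸ hL₂ w List.mem_cons_self) hnil
  | cons v L₁ ih =>
    cases L₂ with
    | nil =>
      simp only [List.flatten_nil, List.flatten_cons, List.append_eq_nil_iff] at hflat
      exact absurd (hflat.1 ▸ hL₁ v List.mem_cons_self) hnil
    | cons w L₂ =>
      simp only [List.flatten_cons] at hflat
      have hv := hL₁ v List.mem_cons_self
      have hw := hL₂ w List.mem_cons_self
      have hvw : v = w :=
        (List.prefix_or_prefix_of_prefix (List.prefix_append v _)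
          (hflat ▸ List.prefix_append w _)).elim (h v hv w hw) fun hwv => (h w hw v hv hwv).symm
      subst hvw
      rw [ih L₂ (fun u hu => hL₁ u (List.mem_cons_of_mem _ hu))
        (fun u hu => hL₂ u (List.mem_cons_of_mem _ hu)) (List.append_cancel_left hflat)]

theorem sum_inv_card_pow_length_le_one [Fintype α] [Nonempty α] {S : Finset (List α)}
    (h : PrefixFree (S : Set (List α))) :
    ∑ w ∈ S, (1 / Fintype.card α : ℝ) ^ w.length ≤ 1 := by
  by_cases hnil : [] ∈ (S : Set (List α))
  · rw [Finset.coe_eq_singleton.1 (h.eq_singleton_nil hnil)]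
    simp
  · exact InformationTheory.kraft_mcmillan_inequality (h.uniquelyDecodable hnil)

theorem tsum_inv_card_pow_length_le_one [Fintype α] [Nonempty α] {S : Set (List α)}
    (h : PrefixFree S) :
    ∑' w : S, ((Fintype.card α : ℝ≥0∞)⁻¹) ^ (w : List α).length ≤ 1 := by
  refine ENNReal.summable.tsum_le_of_sum_le fun s => ?_
  have hs : PrefixFree (↑(s.map (Function.Embedding.subtype _)) : Set (List α)) :=
    fun p hp q hq => by
      simp only [Finset.coe_map, Function.Embedding.coe_subtype, Set.mem_image] at hp hq
      obtain ⟨⟨p, hpS⟩, -, rfl⟩ := hp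
      obtain ⟨⟨q, hqS⟩, -, rfl⟩ := hq
      exact h p hpS q hqS
  have hcard : (0 : ℝ) < Fintype.card α := Nat.cast_pos.2 Fintype.card_pos
  calc ∑ w ∈ s, ((Fintype.card α : ℝ≥0∞)⁻¹) ^ (w : List α).length
      = ENNReal.ofReal (∑ w ∈ s.map (Function.Embedding.subtype _),
          (1 / Fintype.card α : ℝ) ^ w.length) := by
        rw [Finset.sum_map, ENNReal.ofReal_sum_of_nonneg fun _ _ => by positivity]
        refine Finset.sum_congr rfl fun w _ => ?_
        rw [ENNReal.ofReal_pow (by positivity), one_div, ENNReal.ofReal_inv_of_pos hcard,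
          ENNReal.ofReal_natCast]
        rfl
    _ ≤ 1 := ENNReal.ofReal_le_one.2 (sum_inv_card_pow_length_le_one hs)

end PrefixFree

def binInv (l : List Bool) : ℕ := l.foldl (fun n b => Nat.bit b n) 1

@[simp]
theorem binInv_nil : binInv [] = 1 := rfl

@[simp]
theorem binInv_append_singleton (l : List Bool) (b : Bool) :
    binInv (l ++ [b]) = Nat.bit b (binInv l) := by
  simp [binInv]

theorem two_pow_length_le_binInv (l : List Bool) : 2 ^ l.length ≤ binInv l := by
  induction l using List.reverseRecOn with
  | nil => simp
  | append_singleton l b ih =>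
    rw [binInv_append_singleton, Nat.bit_val, List.length_append, List.length_singleton, pow_succ]
    cases b <;> simp <;> omega

theorem binInv_lt_two_pow_succ (l : List Bool) : binInv l < 2 ^ (l.length + 1) := by
  induction l using List.reverseRecOn with
  | nil => simp
  | append_singleton l b ih =>
    rw [binInv_append_singleton, Nat.bit_val, List.length_append, List.length_singleton, pow_succ]
    cases b <;> simp <;> omega

theorem one_le_binInv (l : List Bool) : 1 ≤ binInv l :=
  le_trans Nat.one_le_two_pow (two_pow_length_le_binInv l)

theorem bin_bit {n : ℕ} (hn : n ≠ 0) (b : Bool) : bin (Nat.bit b n) = bin n ++ [b] := by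
  have hbits : n.bits ≠ [] := fun h =>
    hn (Nat.size_eq_zero.1 (by rw [← Nat.size_eq_bits_len, h]; rfl))
  rw [bin, bin, Nat.bits_append_bit n b (fun h => absurd h hn), List.reverse_cons,
    List.tail_append_of_ne_nil (List.reverse_ne_nil_iff.2 hbits)]

theorem bin_binInv (l : List Bool) : bin (binInv l) = l := by
  induction l using List.reverseRecOn with
  | nil => rfl
  | append_singleton l b ih =>
    rw [binInv_append_singleton, bin_bit (Nat.one_le_iff_ne_zero.1 (one_le_binInv l)), ih]

theorem binInv_bin {n : ℕ} (hn : 1 ≤ n) : binInv (bin n) = n := by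
  induction n using Nat.binaryRec' with
  | zero => omega
  | bit b m h ih =>
    rcases Nat.eq_zero_or_pos m with rfl | hm
    · rw [h rfl]; rfl
    · rw [bin_bit hm.ne', binInv_append_singleton, ih hm]

def binEquiv (A : Set (List Bool)) : Ups A ≃ A where
  toFun n := ⟨bin n, n.2.2⟩
  invFun p := ⟨binInv p, one_le_binInv p, (bin_binInv p).symm ▸ p.2⟩
  left_inv n := Subtype.ext (binInv_bin n.2.1)
  right_inv p := Subtype.ext (bin_binInv p)

theorem tsum_Ups_inv (A : Set (List Bool)) :
    ∑' n : Ups A, ((n : ℕ) : ℝ≥0∞)⁻¹ = ∑' p : A, (binInv p : ℝ≥0∞)⁻¹ :=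
  ((binEquiv A).symm.tsum_eq fun n : Ups A => ((n : ℕ) : ℝ≥0∞)⁻¹).symm

theorem inv_binInv_le (l : List Bool) : (binInv l : ℝ≥0∞)⁻¹ ≤ 2⁻¹ ^ l.length := by
  rw [← ENNReal.inv_pow]
  exact ENNReal.inv_le_inv' (by exact_mod_cast two_pow_length_le_binInv l)

theorem inv_two_pow_length_div_two_le (l : List Bool) :
    (2⁻¹ : ℝ≥0∞) ^ l.length / 2 ≤ (binInv l : ℝ≥0∞)⁻¹ := by
  rw [div_eq_mul_inv, ← pow_succ, ← ENNReal.inv_pow]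
  exact ENNReal.inv_le_inv' (by exact_mod_cast (binInv_lt_two_pow_succ l).le)

theorem stmt_0_general (C : List Bool →. List Bool) (hsd : SelfDelim C) :
    1 ≥ Omega C ∧ Omega C ≥ zeta C ∧ zeta C ≥ Omega C / 2 ∧ Omega C / 2 ≥ 0 := by
  have hzeta : zeta C = ∑' p : dom C, (binInv p : ℝ≥0∞)⁻¹ := tsum_Ups_inv (dom C)
  refine ⟨?_, ?_, ?_, zero_le⟩
  · simpa [Omega] using PrefixFree.tsum_inv_card_pow_length_le_one (α := Bool) hsd
  · rw [hzeta]
    exact ENNReal.tsum_le_tsum fun p => inv_binInv_le p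
  · rw [hzeta, Omega, div_eq_mul_inv, ← ENNReal.tsum_mul_right]
    exact ENNReal.tsum_le_tsum fun p => by
      simpa only [div_eq_mul_inv] using inv_two_pow_length_div_two_le p

/-- Every self-delimiting Turing machine `C` satisfies
`1 ≥ Ω_C ≥ ζ_C ≥ Ω_C/2 ≥ 0`; in particular it is a tuatara machine. -/
theorem stmt_0 (C : List Bool →. List Bool) (hC : Partrec C) (hsd : SelfDelim C) :
    1 ≥ Omega C ∧ Omega C ≥ zeta C ∧ zeta C ≥ Omega C / 2 ∧ Omega C / 2 ≥ 0 :=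
  stmt_0_general C hsd
end

section
/- For every universal self-delimiting Turing machine U, liminf_{n→∞} (1/n)·log₂(#{p ∈ dom(U) : |p| ≤ n}) = 1. -/
open scoped ENNReal

/-!
A prefix-free set contains at most `2ⁿ` strings of length `≤ n` (pad each one to length `n`),
so `log₂` of the count is at most `n`. Conversely, for each `m` the strings `0ᵏ1x` with
`|x| = m·k` form the domain of a self-delimiting machine acting as the identity. A universal
machine simulates it with constant overhead `c`, so `U` has at least `2^(m·k)` halting programs
of length `≤ (m+1)·k + 1 + c`; hence `log₂` of the count is at least `m/(m+1)·n - O(1)`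
for every `m`, and the normalised logarithm converges to `1`.
-/

open Filter Topology

theorem ncard_length_le_le_card_pow_of_prefixFree {α : Type*} [Fintype α] [Inhabited α]
    {S : Set (List α)} (hS : ∀ p ∈ S, ∀ q ∈ S, p <+: q → p = q) (n : ℕ) :
    {p | p ∈ S ∧ p.length ≤ n}.ncard ≤ Fintype.card α ^ n := by
  let pad : {p | p ∈ S ∧ p.length ≤ n} → List.Vector α n := fun p =>
    ⟨p.1 ++ List.replicate (n - p.1.length) default, by simp [p.2.2]⟩
  have hpad : Function.Injective pad := by
    have key : ∀ p q : {p | p ∈ S ∧ p.length ≤ n}, p.1.length ≤ q.1.length →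
        pad p = pad q → p = q := by
      intro p q hle heq
      have hp : p.1 <+: (pad q).1 := by rw [← heq]; exact List.prefix_append _ _
      exact Subtype.ext (hS _ p.2.1 _ q.2.1
        (List.prefix_of_prefix_length_le hp (List.prefix_append _ _) hle))
    intro p q heq
    rcases le_total p.1.length q.1.length with hle | hle
    · exact key p q hle heq
    · exact (key q p hle heq.symm).symm
  calc {p | p ∈ S ∧ p.length ≤ n}.ncard = Nat.card {p | p ∈ S ∧ p.length ≤ n} :=
        (Nat.card_coe_set_eq _).symm
    _ ≤ Nat.card (List.Vector α n) := Nat.card_le_card_of_injective pad hpad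
    _ = Fintype.card α ^ n := by rw [Nat.card_eq_fintype_card, card_vector]

theorem SelfDelim.logb_two_ncard_dom_le {U : List Bool →. List Bool} (hU : SelfDelim U) (n : ℕ) :
    Real.logb 2 ({p | p ∈ dom U ∧ p.length ≤ n}.ncard : ℝ) ≤ n := by
  rcases Nat.eq_zero_or_pos {p | p ∈ dom U ∧ p.length ≤ n}.ncard with h0 | hpos
  · simp [h0]
  rw [Real.logb_le_iff_le_rpow one_lt_two (by exact_mod_cast hpos), Real.rpow_natCast]
  exact_mod_cast (ncard_length_le_le_card_pow_of_prefixFree hU n).trans_eq (by simp)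

/-- The machine with domain `{0ᵏ1x : |x| = m·k}`, acting as the identity there. -/
def unaryHeaderMachine (m : ℕ) : List Bool →. List Bool := fun p =>
  Part.ofOption (if p.length = (m + 1) * p.idxOf true + 1 then some p else none)

namespace unaryHeaderMachine

theorem partrec (m : ℕ) : Partrec (unaryHeaderMachine m) := by
  apply Computable.ofOption
  have hidx : Primrec fun p : List Bool => p.idxOf true :=
    Primrec.list_idxOf.comp (.const true) .id
  have hcond : PrimrecPred fun p : List Bool => p.length = (m + 1) * p.idxOf true + 1 :=
    Primrec.eq.comp Primrec.list_length
      (Primrec.succ.comp (Primrec.nat_mul.comp (.const (m + 1)) hidx))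
  exact (Primrec.ite hcond (Primrec.option_some.comp .id) (.const none)).to_comp

theorem mem_dom_iff {m : ℕ} {p : List Bool} :
    p ∈ dom (unaryHeaderMachine m) ↔ p.length = (m + 1) * p.idxOf true + 1 := by
  by_cases h : p.length = (m + 1) * p.idxOf true + 1 <;>
    simp [dom, unaryHeaderMachine, Part.ofOption, h]

theorem apply_of_mem_dom {m : ℕ} {p : List Bool} (h : p ∈ dom (unaryHeaderMachine m)) :
    unaryHeaderMachine m p = Part.some p := by
  simp [unaryHeaderMachine, mem_dom_iff.1 h]

theorem true_mem_of_mem_dom {m : ℕ} {p : List Bool} (h : p ∈ dom (unaryHeaderMachine m)) :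
    true ∈ p := by
  rw [← List.idxOf_lt_length_iff]
  have := mem_dom_iff.1 h
  by_contra! hc
  have : p.idxOf true ≤ (m + 1) * p.idxOf true := Nat.le_mul_of_pos_left _ m.succ_pos
  omega

theorem selfDelim (m : ℕ) : SelfDelim (unaryHeaderMachine m) := by
  rintro p hp _ hq ⟨r, rfl⟩
  have hidx : (p ++ r).idxOf true = p.idxOf true :=
    List.idxOf_append_of_mem (true_mem_of_mem_dom hp)
  have hp' := mem_dom_iff.1 hp
  have hq' := mem_dom_iff.1 hq
  rw [hidx, List.length_append] at hq'
  have : r.length = 0 := by omega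
  simp [List.length_eq_zero_iff.1 this]

theorem replicate_append_mem_dom {m k : ℕ} {x : List Bool} (hx : x.length = m * k) :
    List.replicate k false ++ true :: x ∈ dom (unaryHeaderMachine m) := by
  have hidx : (List.replicate k false ++ true :: x).idxOf true = k := by
    rw [List.idxOf_append_of_notMem (by simp), List.idxOf_cons_self]
    simp
  rw [mem_dom_iff, hidx]
  simp only [List.length_append, List.length_replicate, List.length_cons, hx]
  ring

end unaryHeaderMachine

theorem UnivSD.exists_two_pow_le_ncard_dom {U : List Bool →. List Bool} (huniv : UnivSD U)
    (m : ℕ) : ∃ c : ℕ, ∀ k n : ℕ, (m + 1) * k + 1 + c ≤ n →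
      2 ^ (m * k) ≤ {p | p ∈ dom U ∧ p.length ≤ n}.ncard := by
  obtain ⟨c, hc⟩ := huniv.2 _ (unaryHeaderMachine.partrec m) (unaryHeaderMachine.selfDelim m)
  refine ⟨c, fun k n hn => ?_⟩
  have hprog : ∀ x : List.Vector Bool (m * k), ∃ p : {p | p ∈ dom U ∧ p.length ≤ n},
      U p = Part.some (List.replicate k false ++ true :: x.1) := by
    intro x
    have hx := unaryHeaderMachine.replicate_append_mem_dom x.2
    obtain ⟨p, hlen, hp⟩ := hc _ hx
    rw [unaryHeaderMachine.apply_of_mem_dom hx] at hp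
    have hlen' : (List.replicate k false ++ true :: x.1).length = (m + 1) * k + 1 := by
      simp only [List.length_append, List.length_replicate, List.length_cons, x.2]
      ring
    refine ⟨⟨p, ?_, by omega⟩, hp⟩
    simp [dom, hp]
  choose prog hprog using hprog
  have hinj : Function.Injective prog := fun x y hxy =>
    Subtype.ext <| List.cons_injective <| List.append_cancel_left <|
      Part.some_injective ((hprog x).symm.trans (hxy ▸ hprog y))
  have : Finite {p | p ∈ dom U ∧ p.length ≤ n} :=
    ((List.finite_length_le Bool n).subset fun _ hp => hp.2).to_subtype
  calc 2 ^ (m * k) = Nat.card (List.Vector Bool (m * k)) := by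
        rw [Nat.card_eq_fintype_card, card_vector, Fintype.card_bool]
    _ ≤ Nat.card {p | p ∈ dom U ∧ p.length ≤ n} := Nat.card_le_card_of_injective prog hinj
    _ = {p | p ∈ dom U ∧ p.length ≤ n}.ncard := Nat.card_coe_set_eq _

theorem UnivSD.eventually_le_logb_two_ncard_dom {U : List Bool →. List Bool}
    (huniv : UnivSD U) {a : ℝ} (ha : a < 1) : ∃ C : ℝ, ∀ᶠ n : ℕ in atTop,
      a * n - C ≤ Real.logb 2 ({p | p ∈ dom U ∧ p.length ≤ n}.ncard : ℝ) := by
  obtain ⟨m, hm⟩ := exists_nat_one_div_lt (sub_pos.2 ha)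
  obtain ⟨c, hc⟩ := huniv.exists_two_pow_le_ncard_dom m
  refine ⟨m + 1 + c, eventually_atTop.2 ⟨1 + c, fun n hn => ?_⟩⟩
  have hdiv := Nat.div_mul_le_self (n - (1 + c)) (m + 1)
  have hdiv' := Nat.lt_div_mul_add (a := n - (1 + c)) (b := m + 1) (by omega)
  generalize (n - (1 + c)) / (m + 1) = k at hdiv hdiv'
  have hk : (m + 1) * k + 1 + c ≤ n := by
    rw [mul_comm]
    omega
  have hk' : n < (m + 1) * k + (m + 1) + 1 + c := by
    rw [mul_comm]
    omega
  have hlog : ((m * k : ℕ) : ℝ) ≤ Real.logb 2 ({p | p ∈ dom U ∧ p.length ≤ n}.ncard : ℝ) := by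
    have h := Real.logb_le_logb_of_le one_lt_two (by positivity)
      (show ((2 : ℕ) ^ (m * k) : ℝ) ≤ ({p | p ∈ dom U ∧ p.length ≤ n}.ncard : ℝ) by
        exact_mod_cast hc k n hk)
    simpa [Real.logb_pow] using h
  have ha' : a * (m + 1) ≤ m := by
    rw [div_lt_iff₀ (by positivity)] at hm
    linarith
  have hn' : (n : ℝ) ≤ (m + 1) * k + (m + 1) + 1 + c := by exact_mod_cast hk'.le
  have hn0 : (0 : ℝ) ≤ n := n.cast_nonneg
  push_cast at hlog
  nlinarith

theorem tendsto_div_natCast_one {g : ℕ → ℝ} (hup : ∀ n, g n ≤ n)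
    (hlo : ∀ a < 1, ∃ C : ℝ, ∀ᶠ n : ℕ in atTop, a * n - C ≤ g n) :
    Tendsto (fun n => g n / n) atTop (𝓝 1) := by
  refine tendsto_order.2 ⟨fun a ha => ?_, fun b hb =>
    Eventually.of_forall fun n => (div_le_one_of_le₀ (hup n) n.cast_nonneg).trans_lt hb⟩
  obtain ⟨C, hC⟩ := hlo ((a + 1) / 2) (by linarith)
  have hlim : Tendsto (fun n : ℕ => (a + 1) / 2 - C / n) atTop (𝓝 ((a + 1) / 2)) := by
    simpa using tendsto_const_nhds.sub (tendsto_const_div_atTop_nhds_zero_nat C)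
  filter_upwards [hC, hlim.eventually (lt_mem_nhds (show a < (a + 1) / 2 by linarith)),
    eventually_gt_atTop 0] with n hn hlt hpos
  have hpos' : (0 : ℝ) < n := by exact_mod_cast hpos
  refine hlt.trans_le ?_
  rw [le_div_iff₀ hpos', sub_mul, div_mul_cancel₀ _ hpos'.ne']
  exact hn

theorem stmt_1_general (U : List Bool →. List Bool) (huniv : UnivSD U) :
    Filter.liminf
      (fun n : ℕ =>
        Real.logb 2 ((Set.ncard {p : List Bool | p ∈ dom U ∧ p.length ≤ n} : ℝ)) / n)
      Filter.atTop = 1 :=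
  (tendsto_div_natCast_one huniv.1.logb_two_ncard_dom_le
    fun _ ha => huniv.eventually_le_logb_two_ncard_dom ha).liminf_eq

/-- For every universal self-delimiting Turing machine `U`,
`liminf_{n→∞} (1/n)·log₂(#{p ∈ dom U : |p| ≤ n}) = 1`. -/
theorem stmt_1 (U : List Bool →. List Bool) (hU : Partrec U) (huniv : UnivSD U) :
    Filter.liminf
      (fun n : ℕ =>
        Real.logb 2 ((Set.ncard {p : List Bool | p ∈ dom U ∧ p.length ≤ n} : ℝ)) / n)
      Filter.atTop = 1 :=
  stmt_1_general U huniv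
end

section
/- The domain of a universal self-delimiting Turing machine U cannot consist only of strings whose lengths are integer powers of two: it is not the case that for every p ∈ dom(U) there exists k : ℕ with |p| = 2^k. -/
open scoped ENNReal

/-!
Let `C` be the identity on the strings `1ᵗ 0 w` with `|w| = 2ᵗ + 1`; the unary header fixes the
length, so `C` is self-delimiting. If `U` simulates `C` with overhead `c`, then for `t = c + 4`
each of the `2 ^ (2ᵗ + 1)` inputs gets a program of length `< 2ᵗ⁺¹`, hence of length `≤ 2ᵗ` when
all lengths in `dom U` are powers of two. These programs form a prefix-free family of
`2 ^ (2ᵗ + 1)` strings of length at most `2ᵗ`, of which there can be at most `2 ^ 2ᵗ`.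
-/

open Function

/-- Padding each string to length `n` separates a prefix-free family, so it injects into
`List.Vector α n`. -/
theorem card_le_pow_of_prefix_injective {α ι : Type*} [Fintype α] [Inhabited α] [Fintype ι]
    {n : ℕ} (f : ι → List α) (hlen : ∀ i, (f i).length ≤ n)
    (hf : ∀ i j, f i <+: f j → i = j) : Fintype.card ι ≤ Fintype.card α ^ n := by
  let pad : ι → List.Vector α n := fun i => ⟨(f i ++ List.replicate n default).take n, by simp⟩
  have prefix_pad : ∀ i, f i <+: (pad i).toList := fun i =>
    List.prefix_take_iff.2 ⟨List.prefix_append _ _, hlen i⟩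
  have hpad : Injective pad := by
    intro i j hij
    have hj : f j <+: (pad i).toList := hij ▸ prefix_pad j
    rcases List.prefix_or_prefix_of_prefix (prefix_pad i) hj with h | h
    · exact hf i j h
    · exact (hf j i h).symm
  simpa [card_vector] using Fintype.card_le_of_injective pad hpad

theorem SelfDelim.prefix_injective {U : List Bool →. List Bool} (hU : SelfDelim U)
    {ι : Type*} {p x : ι → List Bool} (hx : Injective x) (hp : ∀ i, U (p i) = Part.some (x i))
    (i j : ι) (hij : p i <+: p j) : i = j := by
  have hdom : ∀ i, p i ∈ dom U := fun i => by simp [dom, hp i]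
  have hpij : p i = p j := hU _ (hdom i) _ (hdom j) hij
  exact hx (Part.some_injective ((hp i).symm.trans (hpij ▸ hp j)))

/-- `x = 1ᵗ 0 w` with `|w| = 2ᵗ + 1`, where `t = x.idxOf false`. -/
def HasPowHeader (x : List Bool) : Prop :=
  x.length = 2 ^ x.idxOf false + x.idxOf false + 2

instance : DecidablePred HasPowHeader := fun x => by unfold HasPowHeader; infer_instance

def powHeaderId : List Bool →. List Bool := fun x =>
  ((if HasPowHeader x then some x else none : Option (List Bool)) : Part (List Bool))

theorem mem_dom_powHeaderId {x : List Bool} : x ∈ dom powHeaderId ↔ HasPowHeader x := by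
  simp only [dom, powHeaderId, Set.mem_ofPred_eq]
  split <;> simp_all

theorem powHeaderId_of_hasPowHeader {x : List Bool} (hx : HasPowHeader x) :
    powHeaderId x = Part.some x := by
  simp [powHeaderId, hx]

theorem partrec_powHeaderId : Partrec powHeaderId := by
  have hidx : Primrec (fun x : List Bool => x.idxOf false) :=
    Primrec.list_idxOf.comp (Primrec.const false) Primrec.id
  have hpow : Primrec (fun t : ℕ => 2 ^ t) :=
    (Primrec₂.unpaired'.1 Nat.Primrec.pow).comp (Primrec.const 2) Primrec.id
  have hheader : PrimrecPred HasPowHeader :=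
    Primrec.eq.comp Primrec.list_length
      (Primrec.nat_add.comp (Primrec.nat_add.comp (hpow.comp hidx) hidx) (Primrec.const 2))
  exact Computable.ofOption
    (Primrec.ite hheader (Primrec.option_some.comp Primrec.id) (Primrec.const none)).to_comp

theorem false_mem_of_hasPowHeader {x : List Bool} (hx : HasPowHeader x) : false ∈ x := by
  by_contra hfalse
  rw [HasPowHeader, List.idxOf_eq_length_iff.2 hfalse] at hx
  have := Nat.lt_two_pow_self (n := x.length)
  omega

theorem selfDelim_powHeaderId : SelfDelim powHeaderId := by
  rintro p hp q hq ⟨s, rfl⟩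
  rw [mem_dom_powHeaderId] at hp hq
  rw [HasPowHeader, List.idxOf_append_of_mem (false_mem_of_hasPowHeader hp)] at hq
  have hs : s.length = 0 := by
    rw [HasPowHeader] at hp
    simp only [List.length_append] at hq
    omega
  simp [List.length_eq_zero_iff.1 hs]

theorem hasPowHeader_replicate_append (t : ℕ) {w : List Bool} (hw : w.length = 2 ^ t + 1) :
    HasPowHeader (List.replicate t true ++ false :: w) := by
  have hidx : (List.replicate t true ++ false :: w).idxOf false = t := by
    rw [List.idxOf_append_of_notMem (by simp), List.idxOf_cons_self]
    simp
  rw [HasPowHeader, hidx]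
  simp only [List.length_append, List.length_replicate, List.length_cons, hw]
  omega

theorem le_two_pow_of_isPowTwo_of_lt {m t : ℕ} (hm : ∃ k, m = 2 ^ k) (h : m < 2 ^ (t + 1)) :
    m ≤ 2 ^ t := by
  obtain ⟨k, rfl⟩ := hm
  rw [Nat.pow_lt_pow_iff_right one_lt_two] at h
  exact Nat.pow_le_pow_right two_pos (Nat.lt_succ_iff.1 h)

theorem stmt_2_general (U : List Bool →. List Bool) (huniv : UnivSD U) :
    ¬ (∀ p ∈ dom U, ∃ k : ℕ, p.length = 2 ^ k) := by
  intro hpow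
  obtain ⟨hsd, hsim⟩ := huniv
  obtain ⟨c, hc⟩ := hsim powHeaderId partrec_powHeaderId selfDelim_powHeaderId
  set t := c + 4
  have hbound : 2 ^ t + t + 2 + c < 2 ^ (t + 1) := by
    have := Nat.lt_two_pow_self (n := c)
    rw [show t + 1 = c + 5 by rfl, pow_add, pow_add]
    omega
  let x : (Fin (2 ^ t + 1) → Bool) → List Bool := fun w =>
    List.replicate t true ++ false :: List.ofFn w
  have hx : ∀ w, HasPowHeader (x w) := fun w => hasPowHeader_replicate_append t (by simp)
  have hxinj : Injective x := fun w₁ w₂ h => List.ofFn_injective (by simpa [x] using h)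
  choose p hplen hpU using fun w => hc (x w) (mem_dom_powHeaderId.2 (hx w))
  have hpx : ∀ w, U (p w) = Part.some (x w) := fun w =>
    (hpU w).trans (powHeaderId_of_hasPowHeader (hx w))
  have hxlen : ∀ w, (x w).length = 2 ^ t + t + 2 := fun w => by simp [x]; omega
  have hplen_le : ∀ w, (p w).length ≤ 2 ^ t := fun w =>
    le_two_pow_of_isPowTwo_of_lt (hpow (p w) (by simp [dom, hpx w]))
      (by linarith [hplen w, hxlen w])
  have hcard := card_le_pow_of_prefix_injective p hplen_le (hsd.prefix_injective hxinj hpx)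
  simp only [Fintype.card_fun, Fintype.card_bool, Fintype.card_fin] at hcard
  exact hcard.not_gt (Nat.pow_lt_pow_right one_lt_two (Nat.lt_succ_self _))

/-- The domain of a universal self-delimiting Turing machine cannot consist
only of strings whose lengths are integer powers of two. -/
theorem stmt_2 (U : List Bool →. List Bool) (hU : Partrec U) (huniv : UnivSD U) :
    ¬ (∀ p ∈ dom U, ∃ k : ℕ, p.length = 2 ^ k) :=
  stmt_2_general U huniv
end

section
/- For every universal self-delimiting Turing machine U, the strict inequalities 1 > Ω_U > ζ_U > Ω_U/2 > 0 hold. -/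
open scoped ENNReal

/-!
Read a string `p` as the integer `unbin p` with binary expansion `1p`. Then
`ζ_U = ∑_{p ∈ dom U} 1 / unbin p` and `2 ^ |p| ≤ unbin p < 2 ^ (|p| + 1)`, with equality
on the left only for `p = 0…0`. Termwise this gives `Ω_U / 2 < ζ_U ≤ Ω_U`, and `ζ_U < Ω_U`
because a prefix-free set with two elements (universality provides two) contains a string
that is not all zeros. `Ω_U ≤ 1` is Kraft's inequality, and `Ω_U < 1` because some string is
incomparable with every halting program: otherwise the halting set would be co-r.e., hence
decidable, and a diagonal machine would output on `0ᵏ1` a string produced by no program of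
length `≤ 2(k+1)`, contradicting universality.
-/

def unbin (p : List Bool) : ℕ := p.foldl (fun n b => Nat.bit b n) 1

@[simp] lemma unbin_nil : unbin [] = 1 := rfl

lemma unbin_concat (p : List Bool) (b : Bool) : unbin (p ++ [b]) = Nat.bit b (unbin p) := by
  simp [unbin, List.foldl_append]

lemma bits_unbin (p : List Bool) : (unbin p).bits = (true :: p).reverse := by
  induction p using List.reverseRecOn with
  | nil => simp [Nat.one_bits]
  | append_singleton p b ih =>
    rw [unbin_concat, Nat.bits_append_bit _ _ fun h => by simp [h] at ih, ih]
    simp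

lemma bin_unbin (p : List Bool) : bin (unbin p) = p := by
  simp [bin, bits_unbin]

lemma unbin_injective : Function.Injective unbin :=
  Function.LeftInverse.injective bin_unbin

lemma unbin_bin {n : ℕ} (hn : 1 ≤ n) : unbin (bin n) = n := by
  induction n using Nat.binaryRec with
  | zero => omega
  | bit b m ih =>
    rcases Nat.eq_zero_or_pos m with rfl | hm
    · cases b <;> simp_all [bin, Nat.one_bits]
    · have hbits : m.bits.reverse ≠ [] := by
        simpa [← List.length_pos_iff, Nat.size_eq_bits_len] using Nat.size_pos.2 hm
      rw [bin, Nat.bits_append_bit _ _ (by omega), List.reverse_cons,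
        List.tail_append_of_ne_nil hbits, ← bin, unbin_concat, ih hm]

lemma size_unbin (p : List Bool) : (unbin p).size = p.length + 1 := by
  rw [← Nat.size_eq_bits_len, bits_unbin]; simp

lemma two_pow_length_le_unbin (p : List Bool) : 2 ^ p.length ≤ unbin p :=
  Nat.lt_size.1 (by rw [size_unbin]; omega)

lemma unbin_lt_two_pow (p : List Bool) : unbin p < 2 ^ (p.length + 1) :=
  Nat.size_le.1 (size_unbin p).le

lemma unbin_replicate_false (k : ℕ) : unbin (List.replicate k false) = 2 ^ k := by
  induction k with
  | zero => rfl
  | succ k ih => rw [List.replicate_succ', unbin_concat, ih, Nat.bit_val]; simp [pow_succ]; ring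

lemma two_pow_length_lt_unbin {p : List Bool} (hp : p ≠ List.replicate p.length false) :
    2 ^ p.length < unbin p :=
  (two_pow_length_le_unbin p).lt_of_ne fun h =>
    hp (unbin_injective (by rw [unbin_replicate_false, h]))

lemma one_le_unbin (p : List Bool) : 1 ≤ unbin p :=
  (Nat.one_le_two_pow).trans (two_pow_length_le_unbin p)

section Kraft

variable {α : Type*}

theorem IsAntichain.uniquelyDecodable {S : Set (List α)} (hS : IsAntichain (· <+: ·) S)
    (hnil : [] ∉ S) : InformationTheory.UniquelyDecodable S := by
  intro L₁
  induction L₁ with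
  | nil =>
    rintro (_ | ⟨v, L₂⟩) - h₂ h
    · rfl
    · exact absurd (h₂ v (by simp)) (by simp_all)
  | cons w L₁ ih =>
    rintro (_ | ⟨v, L₂⟩) h₁ h₂ h
    · exact absurd (h₁ w (by simp)) (by simp_all)
    · have hw := h₁ w (by simp)
      have hv := h₂ v (by simp)
      simp only [List.flatten_cons] at h
      have hwv : w = v := by
        rcases List.prefix_or_prefix_of_prefix (h ▸ List.prefix_append w _)
          (List.prefix_append v _) with hp | hp
        · exact hS.eq hw hv hp
        · exact (hS.eq hv hw hp).symm
      subst hwv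
      rw [ih L₂ (fun x hx => h₁ x (by simp [hx])) (fun x hx => h₂ x (by simp [hx]))
        (List.append_cancel_left h)]

theorem IsAntichain.tsum_inv_card_pow_length_le_one [Fintype α] [Nonempty α]
    {S : Set (List α)} (hS : IsAntichain (· <+: ·) S) :
    ∑' w : S, ((Fintype.card α : ℝ≥0∞)⁻¹) ^ (w : List α).length ≤ 1 := by
  by_cases hnil : [] ∈ S
  · have : S = {[]} := Set.eq_singleton_iff_unique_mem.2
      ⟨hnil, fun w hw => (hS.eq hnil hw List.nil_prefix).symm⟩
    subst this
    simp
  rw [ENNReal.tsum_eq_iSup_sum]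
  refine iSup_le fun s => ?_
  set F := s.map (Function.Embedding.subtype (· ∈ S))
  have hFS : ∀ w ∈ F, w ∈ S := fun w hw => by
    obtain ⟨x, -, rfl⟩ := Finset.mem_map.1 hw
    exact x.2
  have hkraft := InformationTheory.kraft_mcmillan_inequality (S := F) fun L₁ L₂ h₁ h₂ =>
    hS.uniquelyDecodable hnil L₁ L₂ (fun w hw => hFS w (h₁ w hw)) (fun w hw => hFS w (h₂ w hw))
  calc _ = ∑ w ∈ F, ((Fintype.card α : ℝ≥0∞)⁻¹) ^ w.length := (Finset.sum_map _ _ _).symm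
    _ = ENNReal.ofReal (∑ w ∈ F, (1 / (Fintype.card α : ℝ)) ^ w.length) := by
        rw [ENNReal.ofReal_sum_of_nonneg fun _ _ => by positivity]
        refine Finset.sum_congr rfl fun w _ => ?_
        rw [ENNReal.ofReal_pow (by positivity), one_div,
          ENNReal.ofReal_inv_of_pos (by simp [Fintype.card_pos]), ENNReal.ofReal_natCast]
    _ ≤ 1 := ENNReal.ofReal_le_one.2 hkraft

end Kraft

def upsEquiv (A : Set (List Bool)) : A ≃ Ups A where
  toFun p := ⟨unbin p, one_le_unbin p, by rw [bin_unbin]; exact p.2⟩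
  invFun n := ⟨bin n, n.2.2⟩
  left_inv p := Subtype.ext (bin_unbin p)
  right_inv n := Subtype.ext (unbin_bin n.2.1)

lemma zeta_eq_tsum_inv_unbin (M : List Bool →. List Bool) :
    zeta M = ∑' p : dom M, ((unbin p : ℕ) : ℝ≥0∞)⁻¹ :=
  ((upsEquiv (dom M)).tsum_eq fun n => ((n : ℕ) : ℝ≥0∞)⁻¹).symm

lemma two_inv_pow_eq_inv_natCast (k : ℕ) : (2 : ℝ≥0∞)⁻¹ ^ k = ((2 ^ k : ℕ) : ℝ≥0∞)⁻¹ := by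
  rw [← ENNReal.inv_pow]; push_cast; rfl

lemma inv_unbin_le (p : List Bool) : ((unbin p : ℕ) : ℝ≥0∞)⁻¹ ≤ 2⁻¹ ^ p.length := by
  rw [two_inv_pow_eq_inv_natCast]
  exact ENNReal.inv_le_inv.2 (by exact_mod_cast two_pow_length_le_unbin p)

lemma inv_unbin_lt {p : List Bool} (hp : p ≠ List.replicate p.length false) :
    ((unbin p : ℕ) : ℝ≥0∞)⁻¹ < 2⁻¹ ^ p.length := by
  rw [two_inv_pow_eq_inv_natCast]
  exact ENNReal.inv_lt_inv.2 (by exact_mod_cast two_pow_length_lt_unbin hp)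

lemma two_inv_pow_succ_lt_inv_unbin (p : List Bool) :
    2⁻¹ ^ (p.length + 1) < ((unbin p : ℕ) : ℝ≥0∞)⁻¹ := by
  rw [two_inv_pow_eq_inv_natCast]
  exact ENNReal.inv_lt_inv.2 (by exact_mod_cast unbin_lt_two_pow p)

section Machine

variable {M : List Bool →. List Bool}

lemma SelfDelim.isAntichain (hM : SelfDelim M) : IsAntichain (· <+: ·) (dom M) :=
  fun p hp q hq hne hpq => hne (hM p hp q hq hpq)

lemma Omega_le_one (hM : SelfDelim M) : Omega M ≤ 1 := by
  simpa [Omega] using hM.isAntichain.tsum_inv_card_pow_length_le_one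

lemma Omega_lt_one (hM : SelfDelim M) {q : List Bool}
    (hq : ∀ p ∈ dom M, ¬p <+: q ∧ ¬q <+: p) : Omega M < 1 := by
  have hqM : q ∉ dom M := fun h => (hq q h).1 List.prefix_rfl
  have hins : IsAntichain (· <+: ·) (insert q (dom M)) :=
    hM.isAntichain.insert (fun p hp _ => (hq p hp).1) (fun p hp _ => (hq p hp).2)
  have hkraft := hins.tsum_inv_card_pow_length_le_one
  simp only [Fintype.card_bool, Nat.cast_ofNat] at hkraft
  rw [Set.insert_eq, ENNReal.summable.tsum_union_disjoint (f := fun w => 2⁻¹ ^ w.length)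
    (Set.disjoint_singleton_left.2 hqM) ENNReal.summable] at hkraft
  rw [tsum_singleton q fun w : List Bool => (2 : ℝ≥0∞)⁻¹ ^ w.length] at hkraft
  calc Omega M < Omega M + 2⁻¹ ^ q.length :=
        ENNReal.lt_add_right (ne_top_of_le_ne_top ENNReal.one_ne_top (Omega_le_one hM))
          (by simp)
    _ ≤ 1 := by rw [add_comm]; exact hkraft

lemma zeta_le_Omega (M : List Bool →. List Bool) : zeta M ≤ Omega M := by
  rw [zeta_eq_tsum_inv_unbin]
  exact ENNReal.tsum_le_tsum fun p => inv_unbin_le p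

lemma zeta_lt_Omega (hΩ : Omega M ≠ ⊤) {p : List Bool} (hp : p ∈ dom M)
    (hp' : p ≠ List.replicate p.length false) : zeta M < Omega M := by
  have hζ := ne_top_of_le_ne_top hΩ (zeta_le_Omega M)
  rw [zeta_eq_tsum_inv_unbin] at hζ ⊢
  exact ENNReal.tsum_lt_tsum (i := ⟨p, hp⟩) hζ (fun p => inv_unbin_le p) (inv_unbin_lt hp')

lemma Omega_div_two_lt_zeta (hΩ : Omega M ≠ ⊤) {p : List Bool} (hp : p ∈ dom M) :
    Omega M / 2 < zeta M := by
  have hhalf : Omega M / 2 = ∑' p : dom M, (2 : ℝ≥0∞)⁻¹ ^ ((p : List Bool).length + 1) := by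
    simp only [div_eq_mul_inv, Omega, ← ENNReal.tsum_mul_right, pow_succ]
  have hfin : Omega M / 2 ≠ ⊤ := ENNReal.div_ne_top hΩ two_ne_zero
  rw [zeta_eq_tsum_inv_unbin, hhalf]
  rw [hhalf] at hfin
  exact ENNReal.tsum_lt_tsum (i := ⟨p, hp⟩) hfin
    (fun p => (two_inv_pow_succ_lt_inv_unbin p).le) (two_inv_pow_succ_lt_inv_unbin p)

lemma Omega_pos {p : List Bool} (hp : p ∈ dom M) : 0 < Omega M :=
  (ENNReal.pow_pos (by simp) p.length).trans_le (ENNReal.le_tsum (⟨p, hp⟩ : dom M))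

end Machine

section Computability

variable {α β σ : Type*} [Primcodable α] [Primcodable β] [Primcodable σ]

open Nat.Partrec in
theorem Partrec.exists_computable_dom_iff {f : α →. σ} (hf : Partrec f) :
    ∃ t : α → ℕ → Bool, Computable₂ t ∧ ∀ a, (f a).Dom ↔ ∃ s, t a s = true := by
  obtain ⟨c, hc⟩ := Code.exists_code.1 hf
  refine ⟨fun a s => (c.evaln s (Encodable.encode a)).isSome, ?_, fun a => ?_⟩
  · exact (Primrec.option_isSome.comp (Code.primrec_evaln.comp
      ((Primrec.snd.pair (Primrec.const c)).pair (Primrec.encode.comp Primrec.fst)))).to_comp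
  · have heval : c.eval (Encodable.encode a) = (f a).map Encodable.encode := by
      simp [hc, Encodable.encodek]
    calc (f a).Dom ↔ ∃ x, x ∈ c.eval (Encodable.encode a) := by
          rw [heval, ← Part.dom_iff_mem, Part.map_Dom]
      _ ↔ ∃ x s, x ∈ c.evaln s (Encodable.encode a) := by simp only [Code.evaln_complete]
      _ ↔ _ := by rw [exists_comm]; simp [Option.isSome_iff_exists]

theorem REPred.of_exists_computable {p : α → Prop} {t : α → ℕ → Bool} (ht : Computable₂ t)
    (hp : ∀ a, p a ↔ ∃ n, t a n = true) : REPred p :=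
  (Partrec.rfind (p := fun a n => Part.some (t a n)) ht.partrec₂).dom_re.of_eq fun a => by
    rw [hp]; exact (Nat.rfind_dom (p := fun n => Part.some (t a n))).trans (by simp)

theorem Partrec.rePred_exists_dom {f : β →. σ} (hf : Partrec f) {r : α → β → Bool}
    (hr : Computable₂ r) : REPred fun a => ∃ b, r a b = true ∧ (f b).Dom := by
  obtain ⟨t, ht, hdom⟩ := hf.exists_computable_dom_iff
  refine REPred.of_exists_computable (t := fun a n =>
    Option.casesOn (Encodable.decode (α := β) n.unpair.1) false
      fun b => r a b && t b n.unpair.2) ?_ fun a => ?_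
  · refine Computable.option_casesOn
      (Computable.decode.comp (Computable.fst.comp (Computable.unpair.comp Computable.snd)))
      (Computable.const false) ?_
    exact Primrec.and.to_comp.comp₂ (hr.comp (Computable.fst.comp Computable.fst) Computable.snd)
      (ht.comp Computable.snd
        (Computable.snd.comp (Computable.unpair.comp (Computable.snd.comp Computable.fst))))
  · simp only [hdom]
    constructor
    · rintro ⟨b, hb, s, hs⟩
      exact ⟨Nat.pair (Encodable.encode b) s, by simp [Encodable.encodek, hb, hs]⟩
    · rintro ⟨n, hn⟩
      cases hdec : Encodable.decode (α := β) n.unpair.1 with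
      | none => simp [hdec] at hn
      | some b =>
        simp only [hdec, Bool.and_eq_true] at hn
        exact ⟨b, hn.1, _, hn.2⟩

theorem Partrec.exists_computable_eq_of_computablePred_dom [Inhabited σ] {f : α →. σ}
    (hf : Partrec f) (hdom : ComputablePred fun a => (f a).Dom) :
    ∃ g : α → σ, Computable g ∧ ∀ a, (f a).Dom → f a = Part.some (g a) := by
  classical
  refine ⟨fun a => if h : (f a).Dom then (f a).get h else default, ?_, fun a h => by
    simp [h]⟩
  refine (Partrec.cond hdom.decide hf (Computable.const default).partrec).of_eq_tot fun a => ?_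
  by_cases h : (f a).Dom <;> simp [h, Part.get_mem]

theorem Computable.list_map {f : α → List β} {g : α → β → σ} (hf : Computable f)
    (hg : Computable₂ g) : Computable fun a => (f a).map (g a) := by
  let step : α → ℕ × List σ → List σ := fun a x =>
    ((f a)[x.1]?.map fun b => x.2 ++ [g a b]).getD x.2
  have hstep : Computable₂ step :=
    Computable.option_getD (Computable.option_map (Computable.list_getElem?.comp
        (hf.comp Computable.fst) (Computable.fst.comp Computable.snd))
      (Computable.list_concat.comp₂ (Computable.snd.comp (Computable.snd.comp Computable.fst))
        (hg.comp (Computable.fst.comp Computable.fst) Computable.snd)))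
      (Computable.snd.comp Computable.snd)
  refine (Computable.nat_rec (Computable.list_length.comp hf) (Computable.const []) hstep).of_eq
    fun a => ?_
  suffices ∀ k, Nat.rec (motive := fun _ => List σ) [] (fun k acc => step a (k, acc)) k
      = ((f a).take k).map (g a) by rw [this, List.take_length]
  intro k
  induction k with
  | zero => rfl
  | succ k ih => cases h : (f a)[k]? <;> simp_all [step, List.take_add_one]

end Computability

def stringsUpTo : ℕ → List (List Bool)
  | 0 => [[]]
  | n + 1 => [] :: (stringsUpTo n).flatMap fun p => [false :: p, true :: p]

lemma mem_stringsUpTo {n : ℕ} {p : List Bool} : p ∈ stringsUpTo n ↔ p.length ≤ n := by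
  induction n generalizing p with
  | zero => simp [stringsUpTo]
  | succ n ih => rcases p with _ | ⟨_ | _, p⟩ <;> simp [stringsUpTo, ih]

lemma primrec_stringsUpTo : Primrec stringsUpTo := by
  refine (Primrec.nat_rec₁ [[]] (f := fun _ l => [] :: l.flatMap fun p => [false :: p, true :: p])
    ?_).of_eq fun n => by induction n <;> simp_all [stringsUpTo]
  exact Primrec.list_cons.comp (Primrec.const []) (Primrec.list_flatMap Primrec.snd
    (Primrec.list_cons.comp (Primrec.list_cons.comp (Primrec.const false) Primrec.snd)
      (Primrec.list_cons.comp (Primrec.list_cons.comp (Primrec.const true) Primrec.snd)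
        (Primrec.const []))))

lemma exists_computable_forall_ne {E : List Bool → List Bool} (hE : Computable E) :
    ∃ y : ℕ → List Bool, Computable y ∧ ∀ n p, p.length ≤ n → E p ≠ y n := by
  refine ⟨fun n => false :: ((stringsUpTo n).map E).flatten, ?_, fun n p hp h => ?_⟩
  · exact Computable.list_cons.comp (Computable.const false) (Primrec.list_flatten.to_comp.comp
      (Computable.list_map primrec_stringsUpTo.to_comp (hE.comp Computable.snd)))
  · have hmem : E p ∈ (stringsUpTo n).map E := List.mem_map_of_mem (mem_stringsUpTo.2 hp)
    have := (List.sublist_flatten_of_mem hmem).length_le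
    rw [h, List.length_cons] at this
    omega

lemma replicate_prefix_replicate {α : Type*} (a : α) {m n : ℕ} (h : m ≤ n) :
    List.replicate m a <+: List.replicate n a :=
  ⟨List.replicate (n - m) a, by rw [← List.replicate_add, Nat.add_sub_cancel' h]⟩

def unaryCode (k : ℕ) : List Bool := List.replicate k false ++ [true]

lemma length_unaryCode (k : ℕ) : (unaryCode k).length = k + 1 := by
  simp [unaryCode]

lemma eq_of_unaryCode_prefix {m n : ℕ} (h : unaryCode m <+: unaryCode n) : m = n := by
  obtain ⟨k, rfl⟩ := Nat.exists_eq_add_of_le (by simpa [length_unaryCode] using h.length_le)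
  rw [unaryCode, unaryCode, List.replicate_add, List.append_assoc,
    List.prefix_append_right_inj] at h
  cases k <;> simp_all [List.replicate_succ]

lemma isAntichain_range_unaryCode : IsAntichain (· <+: ·) (Set.range unaryCode) := by
  rintro _ ⟨m, rfl⟩ _ ⟨n, rfl⟩ hne h
  exact hne (congrArg unaryCode (eq_of_unaryCode_prefix h))

lemma computablePred_mem_range_unaryCode : ComputablePred (· ∈ Set.range unaryCode) := by
  have hrep : Primrec fun n => List.replicate n false :=
    (Primrec.list_map Primrec.list_range (Primrec₂.const false)).of_eq fun n => by simp
  refine (Primrec.eq.comp Primrec.id (Primrec.list_append.comp (hrep.comp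
    (Primrec.nat_sub.comp Primrec.list_length (Primrec.const 1))) (Primrec.const [true]))
    ).computablePred.of_eq fun x => ⟨fun h => ⟨_, h.symm⟩, ?_⟩
  rintro ⟨k, rfl⟩
  simp [unaryCode]

section Universal

variable {U : List Bool →. List Bool}

theorem SelfDelim.computablePred_dom (hU : Partrec U) (hsd : SelfDelim U)
    (hmax : ∀ q, ∃ p ∈ dom U, p <+: q ∨ q <+: p) : ComputablePred fun q => (U q).Dom := by
  classical
  let r : List Bool → List Bool → Bool := fun q p =>
    !decide (p = q) && (decide (p = q.take p.length) || decide (q = p.take q.length))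
  have hr : Computable₂ r := by
    have fst : Primrec (Prod.fst : List Bool × List Bool → List Bool) := Primrec.fst
    have snd : Primrec (Prod.snd : List Bool × List Bool → List Bool) := Primrec.snd
    refine (Primrec.and.comp (Primrec.not.comp (Primrec.eq.comp snd fst).decide)
      (Primrec.or.comp ?_ ?_)).to_comp
    · exact (Primrec.eq.comp snd
        (Primrec.list_take.comp (Primrec.list_length.comp snd) fst)).decide
    · exact (Primrec.eq.comp fst
        (Primrec.list_take.comp (Primrec.list_length.comp fst) snd)).decide
  -- As every string is comparable with a halting program, `q` does not halt iff some other
  -- halting program is comparable with it; so the halting set is also co-r.e.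
  refine ComputablePred.computable_iff_re_compl_re.2
    ⟨hU.dom_re, (hU.rePred_exists_dom hr).of_eq fun q => ?_⟩
  simp only [r, Bool.and_eq_true, Bool.not_eq_true', decide_eq_false_iff_not, Bool.or_eq_true,
    decide_eq_true_eq, ← List.prefix_iff_eq_take]
  constructor
  · rintro ⟨p, ⟨hpq, hcomp⟩, hp⟩ hq
    rcases hcomp with h | h
    · exact hpq (hsd p hp q hq h)
    · exact hpq (hsd q hq p hp h).symm
  · intro hq
    obtain ⟨p, hp, hcomp⟩ := hmax q
    exact ⟨p, ⟨fun h => hq (h ▸ hp), hcomp⟩, hp⟩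

theorem UnivSD.exists_program (huniv : UnivSD U) {D : Set (List Bool)}
    (hD : ComputablePred (· ∈ D)) (hpf : IsAntichain (· <+: ·) D) {g : List Bool → List Bool}
    (hg : Computable g) :
    ∃ c : ℕ, ∀ x ∈ D, ∃ p : List Bool, p.length ≤ x.length + c ∧ U p = Part.some (g x) := by
  classical
  let C : List Bool →. List Bool := fun x => bif decide (x ∈ D) then Part.some (g x) else Part.none
  have hdom : dom C = D := Set.ext fun x => by by_cases h : x ∈ D <;> simp [dom, C, h]
  obtain ⟨c, hc⟩ := huniv.2 C (Partrec.cond hD.decide hg.partrec Partrec.none)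
    fun p hp q hq hpq => hpf.eq (hdom ▸ hp) (hdom ▸ hq) hpq
  refine ⟨c, fun x hx => ?_⟩
  obtain ⟨p, hp, hUp⟩ := hc x (hdom ▸ hx)
  exact ⟨p, hp, by simp [hUp, C, hx]⟩

theorem UnivSD.exists_mem_dom_ne_replicate (huniv : UnivSD U) :
    ∃ p ∈ dom U, p ≠ List.replicate p.length false := by
  obtain ⟨c, hc⟩ := huniv.exists_program (D := {x | x.length = 1})
    (Primrec.eq.comp Primrec.list_length (Primrec.const 1)).computablePred
    (fun x hx y hy hne hxy => hne (hxy.eq_of_length (hx.trans hy.symm))) Computable.id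
  obtain ⟨p₀, -, h₀⟩ := hc [false] rfl
  obtain ⟨p₁, -, h₁⟩ := hc [true] rfl
  have hd₀ : p₀ ∈ dom U := by simp [dom, h₀]
  have hd₁ : p₁ ∈ dom U := by simp [dom, h₁]
  have hne : p₀ ≠ p₁ := by rintro rfl; simp_all
  by_contra! h
  rcases le_total p₀.length p₁.length with hl | hl
  · exact hne (huniv.1 p₀ hd₀ p₁ hd₁ (by
      rw [h p₀ hd₀, h p₁ hd₁]; exact replicate_prefix_replicate false hl))
  · exact hne (huniv.1 p₁ hd₁ p₀ hd₀ (by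
      rw [h p₀ hd₀, h p₁ hd₁]; exact replicate_prefix_replicate false hl)).symm

theorem UnivSD.not_computablePred_dom (hU : Partrec U) (huniv : UnivSD U) :
    ¬ComputablePred fun p => (U p).Dom := by
  intro hdom
  obtain ⟨E, hE, hEU⟩ := hU.exists_computable_eq_of_computablePred_dom hdom
  obtain ⟨y, hy, hyE⟩ := exists_computable_forall_ne hE
  obtain ⟨c, hc⟩ := huniv.exists_program computablePred_mem_range_unaryCode
    isAntichain_range_unaryCode
    (hy.comp (Primrec.nat_mul.comp (Primrec.const 2) Primrec.list_length).to_comp)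
  obtain ⟨p, hp, hUp⟩ := hc (unaryCode c) ⟨c, rfl⟩
  have hEp := hEU p (by simp [hUp])
  rw [hUp, Part.some_inj] at hEp
  rw [length_unaryCode] at hp hEp
  exact hyE _ p (by omega) hEp.symm

theorem UnivSD.exists_incomparable (hU : Partrec U) (huniv : UnivSD U) :
    ∃ q, ∀ p ∈ dom U, ¬p <+: q ∧ ¬q <+: p := by
  by_contra! h
  exact huniv.not_computablePred_dom hU (huniv.1.computablePred_dom hU fun q => by
    obtain ⟨p, hp, hcomp⟩ := h q
    exact ⟨p, hp, or_iff_not_imp_left.2 hcomp⟩)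

end Universal

/-- For every universal self-delimiting Turing machine `U`,
`1 > Ω_U > ζ_U > Ω_U/2 > 0`. -/
theorem stmt_3 (U : List Bool →. List Bool) (hU : Partrec U) (huniv : UnivSD U) :
    1 > Omega U ∧ Omega U > zeta U ∧ zeta U > Omega U / 2 ∧ Omega U / 2 > 0 := by
  obtain ⟨p, hp, hp'⟩ := huniv.exists_mem_dom_ne_replicate
  obtain ⟨q, hq⟩ := huniv.exists_incomparable hU
  have hΩ : Omega U ≠ ⊤ := ne_top_of_le_ne_top ENNReal.one_ne_top (Omega_le_one huniv.1)
  exact ⟨Omega_lt_one huniv.1 hq, zeta_lt_Omega hΩ hp hp', Omega_div_two_lt_zeta hΩ hp,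
    ENNReal.half_pos (Omega_pos hp).ne'⟩
end
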